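/- Suppose the permutation class C is (q,r)-concentrated and π ∈ C has length n. Given a collection 𝔏 of ℓ ≥ 1 horizontal or vertical lines through the plot of π, all but at most r·ℓ of the points of the plot of π can be covered by at most (q−1)·ℓ + 1 pairwise independent axis-parallel rectangles, none of which intersects any line in 𝔏. -/
import Mathlib


open Filter

/-- A permutation of some finite length `n`. -/
abbrev Permu : Type := Σ n : ℕ, Equiv.Perm (Fin n)

/-- `PLe σ π` : the permutation `σ` is contained in `π` as a pattern. -/
def PLe (σ π : Permu) : Prop :=
  ∃ f : Fin σ.1 → Fin π.1, StrictMono f ∧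
    ∀ i j : Fin σ.1, σ.2 i < σ.2 j ↔ π.2 (f i) < π.2 (f j)

/-- A permutation class: a set of permutations closed downward under containment. -/
def IsPermClass (C : Set Permu) : Prop :=
  ∀ σ π : Permu, PLe σ π → π ∈ C → σ ∈ C

/-- The number of permutations of length `n` in `C`. -/
noncomputable def pcount (C : Set Permu) (n : ℕ) : ℕ :=
  Set.ncard {π ∈ C | π.1 = n}

/-- The upper growth rate of a class, as an extended real. -/
noncomputable def ugr (C : Set Permu) : EReal :=
  limsup (fun n : ℕ => (((pcount C n : ℝ) ^ ((n : ℝ)⁻¹) : ℝ) : EReal)) atTop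

/-- The lower growth rate of a class, as an extended real. -/
noncomputable def lgr (C : Set Permu) : EReal :=
  liminf (fun n : ℕ => (((pcount C n : ℝ) ^ ((n : ℝ)⁻¹) : ℝ) : EReal)) atTop
/-- An axis-parallel rectangle `[a,b] × [c,d]` with integer (1-based) coordinates. -/
structure Rect where
  a : ℕ
  b : ℕ
  c : ℕ
  d : ℕ
deriving DecidableEq

/-- The rectangle `R` covers the point `(x+1, π(x)+1)` of the plot of `π`. -/
def rectCovers (R : Rect) (π : Permu) (x : Fin π.1) : Prop :=
  R.a ≤ (x : ℕ) + 1 ∧ (x : ℕ) + 1 ≤ R.b ∧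
    R.c ≤ (π.2 x : ℕ) + 1 ∧ (π.2 x : ℕ) + 1 ≤ R.d

/-- The rectangle `R` avoids the line `x = c + 1/2` (if `vert`) or `y = c + 1/2`
(otherwise). -/
def rectAvoids (R : Rect) (vert : Bool) (c : ℕ) : Prop :=
  if vert then R.b ≤ c ∨ c + 1 ≤ R.a else R.d ≤ c ∨ c + 1 ≤ R.c

/-- Two rectangles are independent: their index intervals are disjoint and their value
intervals are disjoint. -/
def rectIndep (R S : Rect) : Prop :=
  (R.b < S.a ∨ S.b < R.a) ∧ (R.d < S.c ∨ S.d < R.c)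

/-- A permutation `π` is `(q,r)`-concentrated: for every horizontal or vertical line
through its plot, all but at most `r` of the points of the plot can be covered by at
most `q` pairwise independent axis-parallel rectangles, each avoiding the line. -/
def ConcentratedQR (q r : ℕ) (π : Permu) : Prop :=
  ∀ (vert : Bool) (c : ℕ), c ≤ π.1 →
    ∃ Rs : Finset Rect, Rs.card ≤ q ∧
      (∀ R ∈ Rs, rectAvoids R vert c) ∧
      (∀ R ∈ Rs, ∀ S ∈ Rs, R ≠ S → rectIndep R S) ∧
      {x : Fin π.1 | ¬ ∃ R ∈ Rs, rectCovers R π x}.ncard ≤ r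
/-- The intersection of two rectangles. -/
def interRect (R S : Rect) : Rect :=
  ⟨max R.a S.a, min R.b S.b, max R.c S.c, min R.d S.d⟩

/-- Pairs of rectangles from `A × B` whose intersection is a nonempty rectangle. -/
noncomputable def ovPairs (A B : Finset Rect) : Finset (Rect × Rect) :=
  (A ×ˢ B).filter fun p =>
    max p.1.a p.2.a ≤ min p.1.b p.2.b ∧ max p.1.c p.2.c ≤ min p.1.d p.2.d

/-- The family of pairwise intersections. -/
noncomputable def interFam (A B : Finset Rect) : Finset Rect :=
  (ovPairs A B).image fun p => interRect p.1 p.2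

lemma ovPairs_card (A B : Finset Rect)
    (hA : ∀ R ∈ A, ∀ S ∈ A, R ≠ S → rectIndep R S)
    (hB : ∀ R ∈ B, ∀ S ∈ B, R ≠ S → rectIndep R S) :
    (ovPairs A B).card ≤ A.card + B.card - 1 := by
  classical
  set P := ovPairs A B with hP
  by_cases hPe : P = ∅
  · simp [hPe]
  have hmem : ∀ p ∈ P, p.1 ∈ A ∧ p.2 ∈ B ∧
      p.1.a ≤ max p.1.a p.2.a ∧ max p.1.a p.2.a ≤ p.1.b ∧
      p.2.a ≤ max p.1.a p.2.a ∧ max p.1.a p.2.a ≤ p.2.b := by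
    intro p hp
    rw [hP, ovPairs, Finset.mem_filter, Finset.mem_product] at hp
    refine ⟨hp.1.1, hp.1.2, le_max_left _ _, ?_, le_max_right _ _, ?_⟩ <;> omega
  set g : Rect × Rect → ℕ := fun p => max p.1.a p.2.a with hg
  have hinj : Set.InjOn g P := by
    intro p hp p' hp' hgp
    obtain ⟨h1, h2, h3, h4, h5, h6⟩ := hmem p hp
    obtain ⟨h1', h2', h3', h4', h5', h6'⟩ := hmem p' hp'
    have e1 : p.1 = p'.1 := by
      by_contra hne
      obtain ⟨hx, -⟩ := hA _ h1 _ h1' hne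
      simp only [hg] at hgp
      omega
    have e2 : p.2 = p'.2 := by
      by_contra hne
      obtain ⟨hx, -⟩ := hB _ h2 _ h2' hne
      simp only [hg] at hgp
      omega
    exact Prod.ext e1 e2
  have hcard_img : P.card = (P.image g).card :=
    (Finset.card_image_of_injOn hinj).symm
  set U : Finset ℕ := A.image Rect.a ∪ B.image Rect.a with hU
  have himg : P.image g ⊆ U := by
    intro m hm
    obtain ⟨p, hp, hgp⟩ := Finset.mem_image.mp hm
    obtain ⟨h1, h2, -⟩ := hmem p hp
    rcases max_choice p.1.a p.2.a with h | h
    · exact Finset.mem_union_left _ (Finset.mem_image.mpr ⟨p.1, h1, by rw [← hgp, hg]; exact h.symm⟩)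
    · exact Finset.mem_union_right _ (Finset.mem_image.mpr ⟨p.2, h2, by rw [← hgp, hg]; exact h.symm⟩)
  obtain ⟨p0, hp0⟩ := Finset.nonempty_iff_ne_empty.mpr hPe
  have hUne : U.Nonempty := ⟨g p0, himg (Finset.mem_image_of_mem g hp0)⟩
  set α := U.min' hUne with hα
  have hcard_le : (A.image Rect.a).card + (B.image Rect.a).card ≤ A.card + B.card :=
    Nat.add_le_add (Finset.card_image_le) (Finset.card_image_le)
  by_cases hαmem : α ∈ P.image g
  · obtain ⟨p, hp, hgp⟩ := Finset.mem_image.mp hαmem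
    obtain ⟨h1, h2, h3, -, h5, -⟩ := hmem p hp
    have ha1 : α ≤ p.1.a := U.min'_le _ (Finset.mem_union_left _ (Finset.mem_image_of_mem _ h1))
    have ha2 : α ≤ p.2.a := U.min'_le _ (Finset.mem_union_right _ (Finset.mem_image_of_mem _ h2))
    simp only [hg] at hgp
    have e1 : p.1.a = α := by omega
    have e2 : p.2.a = α := by omega
    have hαinter : α ∈ (A.image Rect.a) ∩ (B.image Rect.a) :=
      Finset.mem_inter.mpr ⟨Finset.mem_image.mpr ⟨p.1, h1, e1⟩,
        Finset.mem_image.mpr ⟨p.2, h2, e2⟩⟩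
    have h1' : 1 ≤ ((A.image Rect.a) ∩ (B.image Rect.a)).card :=
      Finset.card_pos.mpr ⟨α, hαinter⟩
    have hunion := Finset.card_union_add_card_inter (A.image Rect.a) (B.image Rect.a)
    have hUle : U.card ≤ A.card + B.card - 1 := by
      rw [hU]; omega
    calc P.card = (P.image g).card := hcard_img
      _ ≤ U.card := Finset.card_le_card himg
      _ ≤ A.card + B.card - 1 := hUle
  · have hsub : P.image g ⊆ U.erase α := by
      intro m hm
      exact Finset.mem_erase.mpr ⟨fun h => hαmem (h ▸ hm), himg hm⟩
    have hαU : α ∈ U := U.min'_mem hUne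
    have hUle : U.card ≤ (A.image Rect.a).card + (B.image Rect.a).card :=
      Finset.card_union_le _ _
    calc P.card = (P.image g).card := hcard_img
      _ ≤ (U.erase α).card := Finset.card_le_card hsub
      _ = U.card - 1 := Finset.card_erase_of_mem hαU
      _ ≤ A.card + B.card - 1 := by omega

lemma rectAvoids_interRect_left {R S : Rect} {v : Bool} {c : ℕ}
    (h : rectAvoids R v c) : rectAvoids (interRect R S) v c := by
  unfold rectAvoids interRect at *
  cases v <;> simp_all <;> omega

lemma rectAvoids_interRect_right {R S : Rect} {v : Bool} {c : ℕ}
    (h : rectAvoids S v c) : rectAvoids (interRect R S) v c := by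
  unfold rectAvoids interRect at *
  cases v <;> simp_all <;> omega

lemma rectIndep_interRect_left {R R' S S' : Rect} (h : rectIndep R R') :
    rectIndep (interRect R S) (interRect R' S') := by
  obtain ⟨h1, h2⟩ := h
  unfold rectIndep interRect
  dsimp only
  constructor <;> omega

lemma rectIndep_interRect_right {R R' S S' : Rect} (h : rectIndep S S') :
    rectIndep (interRect R S) (interRect R' S') := by
  obtain ⟨h1, h2⟩ := h
  unfold rectIndep interRect
  dsimp only
  constructor <;> omega

lemma concentration_aux (q r : ℕ) (π : Permu) (hc : ConcentratedQR q r π)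
    (L : Finset (Bool × ℕ)) (hlines : ∀ p ∈ L, p.2 ≤ π.1) :
    ∃ Rs : Finset Rect, Rs.card ≤ (q - 1) * L.card + 1 ∧
      (∀ R ∈ Rs, ∀ p ∈ L, rectAvoids R p.1 p.2) ∧
      (∀ R ∈ Rs, ∀ S ∈ Rs, R ≠ S → rectIndep R S) ∧
      {x : Fin π.1 | ¬ ∃ R ∈ Rs, rectCovers R π x}.ncard ≤ r * L.card := by
  classical
  induction L using Finset.induction_on with
  | empty =>
    refine ⟨{⟨1, π.1, 1, π.1⟩}, by simp, by simp, ?_, ?_⟩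
    · intro R hR S hS hne
      simp only [Finset.mem_singleton] at hR hS
      exact absurd (hR.trans hS.symm) hne
    · have : {x : Fin π.1 | ¬ ∃ R ∈ ({⟨1, π.1, 1, π.1⟩} : Finset Rect), rectCovers R π x} = ∅ := by
        ext x
        simp only [Set.mem_setOf_eq, Set.mem_empty_iff_false, iff_false, not_not]
        refine ⟨⟨1, π.1, 1, π.1⟩, Finset.mem_singleton_self _, ?_⟩
        have hx := x.isLt
        have hpx := (π.2 x).isLt
        refine ⟨?_, ?_, ?_, ?_⟩ <;> dsimp only <;> omega
      rw [this]
      simp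
  | @insert p L hpL ih =>
    have hp2 : p.2 ≤ π.1 := hlines p (Finset.mem_insert_self _ _)
    obtain ⟨A, hAcard, hAav, hAind, hAunc⟩ :=
      ih (fun p' hp' => hlines p' (Finset.mem_insert_of_mem hp'))
    obtain ⟨B, hBcard, hBav, hBind, hBunc⟩ := hc p.1 p.2 hp2
    refine ⟨interFam A B, ?_, ?_, ?_, ?_⟩
    · have h1 : (interFam A B).card ≤ (ovPairs A B).card := Finset.card_image_le
      have h2 := ovPairs_card A B hAind hBind
      have h3 : (q - 1) * (insert p L).card + 1 = (q - 1) * L.card + (q - 1) + 1 := by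
        rw [Finset.card_insert_of_notMem hpL]; ring
      rw [h3]
      omega
    · intro T hT p' hp'
      obtain ⟨pr, hpr, hTeq⟩ := Finset.mem_image.mp hT
      have hprm : pr.1 ∈ A ∧ pr.2 ∈ B := by
        have := Finset.mem_filter.mp hpr
        exact Finset.mem_product.mp this.1
      rcases Finset.mem_insert.mp hp' with h | h
      · subst hTeq
        exact h ▸ rectAvoids_interRect_right (hBav pr.2 hprm.2)
      · exact hTeq ▸ rectAvoids_interRect_left (hAav pr.1 hprm.1 p' h)
    · intro T hT T' hT' hne
      obtain ⟨pr, hpr, hTeq⟩ := Finset.mem_image.mp hT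
      obtain ⟨pr', hpr', hTeq'⟩ := Finset.mem_image.mp hT'
      have hprm : pr.1 ∈ A ∧ pr.2 ∈ B := by
        have := Finset.mem_filter.mp hpr
        exact Finset.mem_product.mp this.1
      have hprm' : pr'.1 ∈ A ∧ pr'.2 ∈ B := by
        have := Finset.mem_filter.mp hpr'
        exact Finset.mem_product.mp this.1
      by_cases h1 : pr.1 = pr'.1
      · have h2 : pr.2 ≠ pr'.2 := by
          intro h2
          exact hne (hTeq ▸ hTeq' ▸ by rw [h1, h2])
        exact hTeq ▸ hTeq' ▸ rectIndep_interRect_right (hBind _ hprm.2 _ hprm'.2 h2)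
      · exact hTeq ▸ hTeq' ▸ rectIndep_interRect_left (hAind _ hprm.1 _ hprm'.1 h1)
    · have hsub : {x : Fin π.1 | ¬ ∃ R ∈ interFam A B, rectCovers R π x} ⊆
          {x : Fin π.1 | ¬ ∃ R ∈ A, rectCovers R π x} ∪
          {x : Fin π.1 | ¬ ∃ R ∈ B, rectCovers R π x} := by
        intro x hx
        simp only [Set.mem_setOf_eq, Set.mem_union] at *
        by_contra hcon
        push_neg at hcon
        obtain ⟨⟨R, hR, hRc⟩, ⟨S, hS, hSc⟩⟩ := hcon
        obtain ⟨c1, c2, c3, c4⟩ := hRc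
        obtain ⟨d1, d2, d3, d4⟩ := hSc
        refine hx ⟨interRect R S, ?_, ?_⟩
        · refine Finset.mem_image.mpr ⟨(R, S), ?_, rfl⟩
          refine Finset.mem_filter.mpr ⟨Finset.mem_product.mpr ⟨hR, hS⟩, ?_, ?_⟩ <;>
            dsimp only <;> omega
        · exact ⟨by simp [interRect]; omega, by simp [interRect]; omega,
            by simp [interRect]; omega, by simp [interRect]; omega⟩
      have hle := Set.ncard_le_ncard hsub (Set.toFinite _)
      have hun := Set.ncard_union_le {x : Fin π.1 | ¬ ∃ R ∈ A, rectCovers R π x}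
        {x : Fin π.1 | ¬ ∃ R ∈ B, rectCovers R π x}
      have h3 : r * (insert p L).card = r * L.card + r := by
        rw [Finset.card_insert_of_notMem hpL]; ring
      rw [h3]
      omega

/-- If the class `C` is `(q,r)`-concentrated and `π ∈ C`, then given
any collection of `ℓ ≥ 1` horizontal or vertical lines through the plot of `π`, all but
at most `r·ℓ` of the points of the plot can be covered by at most `(q−1)·ℓ + 1`
pairwise independent axis-parallel rectangles avoiding every line of the collection. -/
theorem concentration_many_lines
    (q r : ℕ) (C : Set Permu) (hC : IsPermClass C)
    (hconc : ∀ π ∈ C, ConcentratedQR q r π)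
    (π : Permu) (hπ : π ∈ C)
    (ℓ : ℕ) (hℓ : 1 ≤ ℓ) (L : Finset (Bool × ℕ)) (hcard : L.card = ℓ)
    (hlines : ∀ p ∈ L, p.2 ≤ π.1) :
    ∃ Rs : Finset Rect, Rs.card ≤ (q - 1) * ℓ + 1 ∧
      (∀ R ∈ Rs, ∀ p ∈ L, rectAvoids R p.1 p.2) ∧
      (∀ R ∈ Rs, ∀ S ∈ Rs, R ≠ S → rectIndep R S) ∧
      {x : Fin π.1 | ¬ ∃ R ∈ Rs, rectCovers R π x}.ncard ≤ r * ℓ := by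
  subst hcard
  exact concentration_aux q r π (hconc π hπ) L hlines
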